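/- arXiv:1907.09374 — 7 statements merged into one kernel-verified Lean document; each statement's English description precedes it below -/
import Mathlib

section
/- Let K be a field and let (c_n) be a sequence in K satisfying c_{n+1}(1 - c_n) = b·c_n + c for all n ≥ 1, with c_1 = c. If c ≠ 1, then c_n ≠ 1 for all n ≥ 1. -/
/-!
If `c_{n+1} = 1`, the recursion at `n + 1` degenerates to `0 = b + c`, and then the recursion
at `n` becomes `(1 - c)(1 - c_n) = 0`. So, as `c ≠ 1`, the value `1` can only be preceded by `1`,
and it would have to go back to `c_1 = c`.
-/

theorem eq_one_of_succ_eq_one {K : Type*} [Field K] {b c x y z : K} (hc : c ≠ 1)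
    (hxy : y * (1 - x) = b * x + c) (hyz : z * (1 - y) = b * y + c) (hy : y = 1) : x = 1 := by
  subst hy
  have hprod : (1 - c) * (1 - x) = 0 := by linear_combination hxy - x * hyz
  have hx := (mul_eq_zero.mp hprod).resolve_left (sub_ne_zero.mpr hc.symm)
  exact (sub_eq_zero.mp hx).symm

theorem stmt1 {K : Type*} [Field K] (b c : K) (hc : c ≠ 1)
    (cs : ℕ → K) (h1 : cs 1 = c)
    (hrec : ∀ n, 1 ≤ n → cs (n + 1) * (1 - cs n) = b * cs n + c) :
    ∀ n, 1 ≤ n → cs n ≠ 1 := by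
  intro n hn
  induction n, hn using Nat.le_induction with
  | base => rwa [h1]
  | succ m hm ih =>
    exact fun h => ih (eq_one_of_succ_eq_one hc (hrec m hm) (hrec (m + 1) (by omega)) h)
end

section
/- Let A be an associative K-algebra over a field K, let n ≥ 2, a, d ∈ K with (d, a) ≠ (1, 0), set e = 1 - d, and let m, Y ∈ A satisfy d·m·Y^{n-1}·m = e·Y^n·m + a·m·Y^n. Define e_k = e^k, a_k = (-a)^k and d_k = d·∑_{j=0}^{k-1} e^j·(-a)^{k-1-j}. Then for all k ≥ 1: d_k·m·Y^{kn-1}·m = e_k·Y^{kn}·m - a_k·m·Y^{kn}. -/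
/-!
Put `P = Y ^ n` and `v = Y ^ (n - 1)`. These commute, and `m * Y ^ (k * n - 1) * m = m * v * P ^ (k - 1) * m`,
so it suffices to iterate a relation `d • (m * v * m) = e • (P * m) + a • (m * P)` with `v` commuting with `P`.
The coefficients obey `d_{k+1} = d * e ^ k - a * d_k`: multiplying the level-`k` identity on the left by `m * v`
and substituting the relation for the two resulting factors `m * v * m` yields level `k + 1`.
-/

open Finset

theorem Commute.geom_sum₂_smul_mul_mul_pow_mul {K A : Type*} [CommRing K] [Ring A] [Algebra K A]
    {a d e : K} {m v P : A} (hvP : Commute v P)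
    (h : d • (m * v * m) = e • (P * m) + a • (m * P)) (j : ℕ) :
    (d * ∑ i ∈ range (j + 1), e ^ i * (-a) ^ (j - i)) • (m * v * P ^ j * m) =
      e ^ (j + 1) • (P ^ (j + 1) * m) - (-a) ^ (j + 1) • (m * P ^ (j + 1)) := by
  induction j with
  | zero => simpa using h
  | succ j ih =>
    set D := d * ∑ i ∈ range (j + 1), e ^ i * (-a) ^ (j - i)
    have hcoeff : d * ∑ i ∈ range (j + 2), e ^ i * (-a) ^ (j + 1 - i) = d * e ^ (j + 1) - a * D := by
      rw [geom_sum₂_succ_eq, Nat.add_sub_cancel]; ring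
    have h₁ := congrArg (m * v * ·) ih
    have h₂ := congrArg (P * ·) ih
    have h₃ := congrArg (· * (v * P ^ j * m)) h
    have h₄ := congrArg (· * P ^ (j + 1)) h
    simp only [mul_smul_comm, smul_mul_assoc, mul_sub, add_mul] at h₁ h₂ h₃ h₄
    have hPv : P * (v * (P ^ j * m)) = v * (P ^ (j + 1) * m) := by
      rw [← mul_assoc, ← hvP.eq, mul_assoc, ← mul_assoc P, ← pow_succ']
    rw [hcoeff]
    linear_combination (norm := skip) D • h₃ - d • h₁ + e • h₂ + (-a) ^ (j + 1) • h₄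
    simp only [mul_assoc, hPv, pow_succ' P (j + 1)] at h₁ h₂ h₃ h₄ ⊢
    module

theorem stmt6_general {K : Type*} [Field K] {A : Type*} [Ring A] [Algebra K A]
    (n : ℕ) (hn : 2 ≤ n) (a d e : K)
    (m Y : A)
    (h : d • (m * Y ^ (n - 1) * m) = e • (Y ^ n * m) + a • (m * Y ^ n)) :
    ∀ k, 1 ≤ k →
      (d * ∑ j ∈ Finset.range k, e ^ j * (-a) ^ (k - 1 - j)) •
          (m * Y ^ (k * n - 1) * m) =
        e ^ k • (Y ^ (k * n) * m) - (-a) ^ k • (m * Y ^ (k * n)) := by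
  intro k hk
  obtain ⟨j, rfl⟩ := Nat.exists_eq_add_of_le' hk
  have hpow : Y ^ ((j + 1) * n - 1) = Y ^ (n - 1) * (Y ^ n) ^ j := by
    rw [← pow_mul, ← pow_add]
    congr 1
    rw [add_mul, one_mul, mul_comm n j]
    omega
  rw [Nat.add_sub_cancel, hpow, ← mul_assoc, mul_comm _ n, pow_mul]
  exact (Commute.pow_pow_self Y _ _).geom_sum₂_smul_mul_mul_pow_mul h j

theorem stmt6 {K : Type*} [Field K] {A : Type*} [Ring A] [Algebra K A]
    (n : ℕ) (hn : 2 ≤ n) (a d e : K) (hda : (d, a) ≠ (1, 0)) (he : e = 1 - d)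
    (m Y : A)
    (h : d • (m * Y ^ (n - 1) * m) = e • (Y ^ n * m) + a • (m * Y ^ n)) :
    ∀ k, 1 ≤ k →
      (d * ∑ j ∈ Finset.range k, e ^ j * (-a) ^ (k - 1 - j)) •
          (m * Y ^ (k * n - 1) * m) =
        e ^ k • (Y ^ (k * n) * m) - (-a) ^ k • (m * Y ^ (k * n)) :=
  stmt6_general n hn a d e m Y h
end

section
/- Let A be an associative unital K-algebra, n ∈ ℕ, a ∈ K, and m, Y ∈ A satisfying m·Y^k·m = 0 for 0 ≤ k ≤ n - 2 (in particular m² = 0 when n ≥ 2) and m·Y^{n-1}·m = a·∑_{j=0}^{n} Y^j·m·Y^{n-j} - a²·Y^{n+1}. Then (m - a·Y)^{n+1} = 0. -/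
/-!
Put `Z = -a • Y`, so that `m - a • Y = Z + m`. Expanding `(Z + m)^(n+1)` in the noncommutative ring,
a word with two letters `m` separated by fewer than `n - 1` letters `Z` vanishes, so only the words
with at most one `m` and the single word `m Z^(n-1) m` survive:
`(Z + m)^(n+1) = Z^(n+1) + ∑ⱼ Zʲ m Z^(n-j) + m Z^(n-1) m`.
Pulling out the scalars, this is `(-a)^(n-1)` times `a² Y^(n+1) - a ∑ⱼ Yʲ m Y^(n-j) + m Y^(n-1) m`,
which vanishes by the hypothesis on `m Y^(n-1) m`.
-/

open Finset

section Sandwich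

variable {R : Type*} [Ring R]

def sandwichSum (Z m : R) (k : ℕ) : R :=
  ∑ j ∈ range (k + 1), Z ^ j * m * Z ^ (k - j)

theorem sandwichSum_succ (Z m : R) (k : ℕ) :
    sandwichSum Z m (k + 1) = Z * sandwichSum Z m k + m * Z ^ (k + 1) := by
  rw [sandwichSum, sum_range_succ', sandwichSum, mul_sum]
  congr 1
  · refine sum_congr rfl fun j _ => ?_
    rw [Nat.add_sub_add_right, pow_succ', mul_assoc Z, mul_assoc Z]
  · simp

theorem mul_sandwichSum_eq_zero {Z m : R} {k : ℕ} (h : ∀ j ≤ k, m * Z ^ j * m = 0) :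
    m * sandwichSum Z m k = 0 := by
  rw [sandwichSum, mul_sum]
  refine sum_eq_zero fun j hj => ?_
  rw [← mul_assoc, ← mul_assoc, h j (Nat.lt_succ_iff.mp (mem_range.mp hj)), zero_mul]

theorem mul_sandwichSum_eq_mul_pow_mul {Z m : R} {p : ℕ} (h : ∀ j < p, m * Z ^ j * m = 0) :
    m * sandwichSum Z m p = m * Z ^ p * m := by
  rw [sandwichSum, mul_sum, sum_range_succ, Nat.sub_self, pow_zero, mul_one, ← mul_assoc,
    sum_eq_zero fun j hj => ?_, zero_add]
  rw [← mul_assoc, ← mul_assoc, h j (mem_range.mp hj), zero_mul]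

theorem sandwichSum_smul {K : Type*} [CommSemiring K] [Algebra K R] (c : K) (Y m : R) (k : ℕ) :
    sandwichSum (c • Y) m k = c ^ k • sandwichSum Y m k := by
  rw [sandwichSum, sandwichSum, smul_sum]
  refine sum_congr rfl fun j hj => ?_
  rw [smul_pow, smul_pow, mul_smul_comm, smul_mul_assoc, smul_mul_assoc, smul_smul, ← pow_add,
    Nat.sub_add_cancel (Nat.lt_succ_iff.mp (mem_range.mp hj))]

variable {Z m : R} {p : ℕ}

theorem add_pow_succ_of_le (h : ∀ j < p, m * Z ^ j * m = 0) {k : ℕ} (hk : k ≤ p) :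
    (Z + m) ^ (k + 1) = Z ^ (k + 1) + sandwichSum Z m k := by
  induction k with
  | zero => simp [sandwichSum]
  | succ k ih =>
    have hmS : m * sandwichSum Z m k = 0 :=
      mul_sandwichSum_eq_zero fun j hj => h j (by omega)
    rw [pow_succ', ih (by omega), sandwichSum_succ, pow_succ' Z (k + 1)]
    noncomm_ring [hmS]

theorem add_pow_add_two_eq (h : ∀ j < p, m * Z ^ j * m = 0) :
    (Z + m) ^ (p + 2) = Z ^ (p + 2) + sandwichSum Z m (p + 1) + m * Z ^ p * m := by
  rw [pow_succ', add_pow_succ_of_le h le_rfl, sandwichSum_succ, pow_succ' Z (p + 1),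
    ← mul_sandwichSum_eq_mul_pow_mul h]
  noncomm_ring

end Sandwich

theorem stmt13 {K : Type*} [Field K] {A : Type*} [Ring A] [Algebra K A]
    (n : ℕ) (hn : 1 ≤ n) (a : K) (m Y : A)
    (hvan : ∀ k, k + 2 ≤ n → m * Y ^ k * m = 0)
    (hrel : m * Y ^ (n - 1) * m =
      a • (∑ j ∈ Finset.range (n + 1), Y ^ j * m * Y ^ (n - j)) - (a ^ 2) • Y ^ (n + 1)) :
    (m - a • Y) ^ (n + 1) = 0 := by
  obtain ⟨p, rfl⟩ : ∃ p, n = p + 1 := ⟨n - 1, by omega⟩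
  rw [Nat.add_sub_cancel, ← sandwichSum] at hrel
  have hvan' : ∀ j < p, m * ((-a) • Y) ^ j * m = 0 := fun j hj => by
    rw [smul_pow, mul_smul_comm, smul_mul_assoc, hvan j (by omega), smul_zero]
  have hexp := add_pow_add_two_eq hvan'
  rw [smul_pow, smul_pow, mul_smul_comm, smul_mul_assoc, sandwichSum_smul, hrel] at hexp
  rw [show m - a • Y = (-a) • Y + m by rw [neg_smul]; abel, hexp]
  module
end

section
/- Fix n ≥ 2 and let (L_1, …, L_{r_0}) be a finite quasi-balanced sequence: L_1 = n, L_{j+1} - L_j ∈ {n, n+1} for 1 ≤ j < r_0, and L_r - 1 ≤ L_j + L_{r-j} ≤ L_r for all 0 < j < r ≤ r_0. Then at least one of the extended sequences (L_1, …, L_{r_0}, L_{r_0} + n) and (L_1, …, L_{r_0}, L_{r_0} + n + 1) is quasi-balanced. -/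
/-!
For `1 ≤ j ≤ m` let `S j = L j + L (m + 1 - j)`; the new term `L (m + 1)` must lie in
`[S j, S j + 1]` for every `j`. Since `L (m + 1 - j) - L (m - j) ∈ {n, n + 1}` and
`L m - 1 ≤ L j + L (m - j) ≤ L m`, every `S j` lies in `[L m + n - 1, L m + n + 1]`.
Two applications of quasi-balance, at `m + 1 - j₀ = (j₁ - j₀) + (m + 1 - j₁)` and at
`j₁ = j₀ + (j₁ - j₀)`, show that the `S j` differ pairwise by at most one, so they cannot hit
both extremes: one of `L m + n`, `L m + n + 1` is a valid next term.
-/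

def QuasiBalancedUpTo (L : ℕ → ℕ) (m : ℕ) : Prop :=
  ∀ r j, 0 < j → j < r → r ≤ m → L r - 1 ≤ L j + L (r - j) ∧ L j + L (r - j) ≤ L r

namespace QuasiBalancedUpTo

variable {L : ℕ → ℕ} {m : ℕ}

theorem update_succ (hL : QuasiBalancedUpTo L m) {v : ℕ}
    (hv : ∀ j, 1 ≤ j → j ≤ m → v - 1 ≤ L j + L (m + 1 - j) ∧ L j + L (m + 1 - j) ≤ v) :
    QuasiBalancedUpTo (Function.update L (m + 1) v) (m + 1) := by
  intro r j hj hjr hr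
  rw [Function.update_of_ne (show j ≠ m + 1 by omega),
    Function.update_of_ne (show r - j ≠ m + 1 by omega)]
  rcases hr.eq_or_lt with rfl | hr
  · rw [Function.update_self]
    exact hv j hj (by omega)
  · rw [Function.update_of_ne hr.ne]
    exact hL r j hj hjr (by omega)

theorem splitSum_le_splitSum_add_one_of_lt (hL : QuasiBalancedUpTo L m) {j₀ j₁ : ℕ}
    (h₀ : 1 ≤ j₀) (h₁ : j₁ ≤ m) (hlt : j₀ < j₁) :
    L j₁ + L (m + 1 - j₁) ≤ L j₀ + L (m + 1 - j₀) + 1 := by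
  have hsplit₀ := hL (m + 1 - j₀) (j₁ - j₀) (by omega) (by omega) (by omega)
  have hsplit₁ := hL j₁ (j₁ - j₀) (by omega) (by omega) h₁
  rw [show m + 1 - j₀ - (j₁ - j₀) = m + 1 - j₁ by omega] at hsplit₀
  rw [show j₁ - (j₁ - j₀) = j₀ by omega] at hsplit₁
  omega

theorem splitSum_le_splitSum_add_one (hL : QuasiBalancedUpTo L m) {j₀ j₁ : ℕ}
    (h₀ : 1 ≤ j₀) (h₀' : j₀ ≤ m) (h₁ : 1 ≤ j₁) (h₁' : j₁ ≤ m) :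
    L j₁ + L (m + 1 - j₁) ≤ L j₀ + L (m + 1 - j₀) + 1 := by
  rcases lt_trichotomy j₀ j₁ with hlt | rfl | hgt
  · exact hL.splitSum_le_splitSum_add_one_of_lt h₀ h₁' hlt
  · omega
  · -- reflect `j ↦ m + 1 - j`, which swaps the two summands
    have := hL.splitSum_le_splitSum_add_one_of_lt (j₀ := m + 1 - j₀) (j₁ := m + 1 - j₁)
      (by omega) (by omega) (by omega)
    rw [show m + 1 - (m + 1 - j₀) = j₀ by omega, show m + 1 - (m + 1 - j₁) = j₁ by omega] at this
    omega

theorem splitSum_mem_Icc {n : ℕ} (hL : QuasiBalancedUpTo L m) (hL1 : L 1 = n)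
    (hstep : ∀ j, 1 ≤ j → j < m → L (j + 1) = L j + n ∨ L (j + 1) = L j + (n + 1))
    {j : ℕ} (hj : 1 ≤ j) (hjm : j ≤ m) :
    L m + n ≤ L j + L (m + 1 - j) + 1 ∧ L j + L (m + 1 - j) ≤ L m + n + 1 := by
  rcases hjm.eq_or_lt with rfl | hjm
  · rw [show j + 1 - j = 1 by omega, hL1]
    omega
  · have hincr := hstep (m - j) (by omega) (by omega)
    rw [show m - j + 1 = m + 1 - j by omega] at hincr
    have := hL m j hj hjm le_rfl
    omega

end QuasiBalancedUpTo

theorem stmt15_general (n : ℕ) (r0 : ℕ)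
    (L : ℕ → ℕ) (hL1 : L 1 = n)
    (hstep : ∀ j, 1 ≤ j → j < r0 → L (j + 1) = L j + n ∨ L (j + 1) = L j + (n + 1))
    (hqb : ∀ r j, 0 < j → j < r → r ≤ r0 →
      L r - 1 ≤ L j + L (r - j) ∧ L j + L (r - j) ≤ L r) :
    ∃ c, (c = n ∨ c = n + 1) ∧
      (∀ r j, 0 < j → j < r → r ≤ r0 + 1 →
        Function.update L (r0 + 1) (L r0 + c) r - 1 ≤
            Function.update L (r0 + 1) (L r0 + c) j +
              Function.update L (r0 + 1) (L r0 + c) (r - j) ∧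
          Function.update L (r0 + 1) (L r0 + c) j +
              Function.update L (r0 + 1) (L r0 + c) (r - j) ≤
            Function.update L (r0 + 1) (L r0 + c) r) := by
  have hL : QuasiBalancedUpTo L r0 := hqb
  by_cases hhigh : ∃ j, 1 ≤ j ∧ j ≤ r0 ∧ L r0 + n + 1 ≤ L j + L (r0 + 1 - j)
  · obtain ⟨j₁, hj₁, hj₁r, hS₁⟩ := hhigh
    refine ⟨n + 1, Or.inr rfl, hL.update_succ fun j hj hjr => ?_⟩
    have := hL.splitSum_mem_Icc hL1 hstep hj hjr
    have := hL.splitSum_le_splitSum_add_one hj hjr hj₁ hj₁r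
    omega
  · push Not at hhigh
    refine ⟨n, Or.inl rfl, hL.update_succ fun j hj hjr => ?_⟩
    have := hL.splitSum_mem_Icc hL1 hstep hj hjr
    have := hhigh j hj hjr
    omega

theorem stmt15 (n : ℕ) (hn : 2 ≤ n) (r0 : ℕ) (hr0 : 1 ≤ r0)
    (L : ℕ → ℕ) (hL1 : L 1 = n)
    (hstep : ∀ j, 1 ≤ j → j < r0 → L (j + 1) = L j + n ∨ L (j + 1) = L j + (n + 1))
    (hqb : ∀ r j, 0 < j → j < r → r ≤ r0 →
      L r - 1 ≤ L j + L (r - j) ∧ L j + L (r - j) ≤ L r) :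
    ∃ c, (c = n ∨ c = n + 1) ∧
      (∀ r j, 0 < j → j < r → r ≤ r0 + 1 →
        Function.update L (r0 + 1) (L r0 + c) r - 1 ≤
            Function.update L (r0 + 1) (L r0 + c) j +
              Function.update L (r0 + 1) (L r0 + c) (r - j) ∧
          Function.update L (r0 + 1) (L r0 + c) j +
              Function.update L (r0 + 1) (L r0 + c) (r - j) ≤
            Function.update L (r0 + 1) (L r0 + c) r) :=
  stmt15_general n r0 L hL1 hstep hqb
end

section
/- Fix n ≥ 2 and let (L_1, …, L_r) be a finite quasi-balanced sequence (L_1 = n, consecutive differences in {n, n+1}, and L_t - 1 ≤ L_j + L_{t-j} ≤ L_t for 0 < j < t ≤ r). Then there exists an infinite quasi-balanced sequence L' ∈ Δ(n, n+1) with L'_j = L_j for all j ≤ r. -/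
/-!
Extend `L` greedily: beyond `r`, let `L t` be the largest split sum `L j + L (t - j)`. This value is
automatically superadditive, so only `L t - 1 ≤ L j + L (t - j)` and the step condition need proof.
Both follow because the split sums `L i + L (t - i)`, `0 < i < t`, differ pairwise by at most one
(by quasi-balance below `t`), and the split `j = t - 1` equals `L (t - 1) + n` while every split is
at most `L (t - 1) + n + 1`.
-/

def IsQuasiBalancedUpTo (L : ℕ → ℕ) (m : ℕ) : Prop :=
  ∀ t j, 0 < j → j < t → t ≤ m → L t - 1 ≤ L j + L (t - j) ∧ L j + L (t - j) ≤ L t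

def HasStepsUpTo (n : ℕ) (L : ℕ → ℕ) (m : ℕ) : Prop :=
  ∀ j, 1 ≤ j → j < m → L (j + 1) = L j + n ∨ L (j + 1) = L j + (n + 1)

def maxSplit (L : ℕ → ℕ) (t : ℕ) : ℕ :=
  (Finset.Icc 1 (t - 1)).sup fun i => L i + L (t - i)

section Extension

variable {n m : ℕ} {L : ℕ → ℕ}

theorem IsQuasiBalancedUpTo.split_le_split_add_one_of_lt (h : IsQuasiBalancedUpTo L m)
    {i k : ℕ} (hi : 1 ≤ i) (hik : i < k) (hkm : k ≤ m) :
    L k + L (m + 1 - k) ≤ L i + L (m + 1 - i) + 1 := by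
  have hk := (h k i (by omega) hik hkm).1
  have hmi := (h (m + 1 - i) (m + 1 - k) (by omega) (by omega) (by omega)).2
  rw [show m + 1 - i - (m + 1 - k) = k - i by omega] at hmi
  omega

theorem IsQuasiBalancedUpTo.split_le_split_add_one (h : IsQuasiBalancedUpTo L m)
    {i k : ℕ} (hi : 1 ≤ i) (him : i ≤ m) (hk : 1 ≤ k) (hkm : k ≤ m) :
    L k + L (m + 1 - k) ≤ L i + L (m + 1 - i) + 1 := by
  rcases lt_trichotomy i k with hik | rfl | hki
  · exact h.split_le_split_add_one_of_lt hi hik hkm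
  · omega
  · have := h.split_le_split_add_one_of_lt (i := m + 1 - i) (k := m + 1 - k)
      (by omega) (by omega) (by omega)
    rw [show m + 1 - (m + 1 - i) = i by omega, show m + 1 - (m + 1 - k) = k by omega] at this
    omega

theorem IsQuasiBalancedUpTo.split_le_last_add_succ (h : IsQuasiBalancedUpTo L m)
    (hs : HasStepsUpTo n L m) (hL1 : L 1 = n) {i : ℕ} (hi : 1 ≤ i) (him : i ≤ m) :
    L i + L (m + 1 - i) ≤ L m + (n + 1) := by
  rcases him.eq_or_lt with rfl | him
  · rw [Nat.add_sub_cancel_left, hL1]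
    omega
  · have hstep := hs (m - i) (by omega) (by omega)
    have hsplit := (h m i hi him le_rfl).2
    rw [show m + 1 - i = m - i + 1 by omega]
    omega

theorem maxSplit_succ (L : ℕ → ℕ) (m : ℕ) :
    maxSplit L (m + 1) = (Finset.Icc 1 m).sup fun i => L i + L (m + 1 - i) := by
  rw [maxSplit, Nat.add_sub_cancel]

theorem IsQuasiBalancedUpTo.succ (h : IsQuasiBalancedUpTo L m)
    (hmax : L (m + 1) = maxSplit L (m + 1)) : IsQuasiBalancedUpTo L (m + 1) := by
  intro t j hj hjt htm
  rcases htm.eq_or_lt with rfl | htm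
  · rw [maxSplit_succ] at hmax
    have hjm : j ∈ Finset.Icc 1 m := Finset.mem_Icc.mpr ⟨hj, by omega⟩
    obtain ⟨i, hi, hieq⟩ := Finset.exists_mem_eq_sup _ ⟨j, hjm⟩ fun i => L i + L (m + 1 - i)
    obtain ⟨hi1, him⟩ := Finset.mem_Icc.mp hi
    have hspread := h.split_le_split_add_one hj (by omega) hi1 him
    have hle := Finset.le_sup (f := fun i => L i + L (m + 1 - i)) hjm
    rw [hmax, hieq] at *
    constructor <;> omega
  · exact h t j hj hjt (by omega)

theorem HasStepsUpTo.succ (hs : HasStepsUpTo n L m) (h : IsQuasiBalancedUpTo L m)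
    (hL1 : L 1 = n) (hm : 1 ≤ m) (hmax : L (m + 1) = maxSplit L (m + 1)) :
    HasStepsUpTo n L (m + 1) := by
  intro j hj hjm
  rcases (Nat.lt_succ_iff.mp hjm).eq_or_lt with rfl | hjm
  · rw [maxSplit_succ] at hmax
    have hlast : L j + n ≤ L (j + 1) := by
      have := Finset.le_sup (f := fun i => L i + L (j + 1 - i)) (Finset.mem_Icc.mpr ⟨hm, le_rfl⟩)
      rwa [Nat.add_sub_cancel_left, hL1, ← hmax] at this
    have hupper : L (j + 1) ≤ L j + (n + 1) := by
      rw [hmax]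
      exact Finset.sup_le fun i hi =>
        h.split_le_last_add_succ hs hL1 (Finset.mem_Icc.mp hi).1 (Finset.mem_Icc.mp hi).2
    omega
  · exact hs j hj hjm

def greedyExtension (r : ℕ) (L : ℕ → ℕ) : ℕ → ℕ
  | t =>
    if r < t then
      (Finset.Icc 1 (t - 1)).attach.sup
        fun i => greedyExtension r L i.1 + greedyExtension r L (t - i.1)
    else L t
  decreasing_by
  · have := Finset.mem_Icc.mp i.2; omega
  · have := Finset.mem_Icc.mp i.2; omega

theorem greedyExtension_of_le {r t : ℕ} (L : ℕ → ℕ) (ht : t ≤ r) :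
    greedyExtension r L t = L t := by
  rw [greedyExtension, if_neg (Nat.not_lt.mpr ht)]

theorem greedyExtension_of_lt {r t : ℕ} (L : ℕ → ℕ) (ht : r < t) :
    greedyExtension r L t = maxSplit (greedyExtension r L) t := by
  rw [greedyExtension, if_pos ht]
  exact Finset.sup_attach _ fun i => greedyExtension r L i + greedyExtension r L (t - i)

theorem greedyExtension_spec {r : ℕ} (hr : 1 ≤ r) (hL1 : L 1 = n) (hs : HasStepsUpTo n L r)
    (h : IsQuasiBalancedUpTo L r) {m : ℕ} (hm : r ≤ m) :
    IsQuasiBalancedUpTo (greedyExtension r L) m ∧ HasStepsUpTo n (greedyExtension r L) m := by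
  have hagree : ∀ t ≤ r, greedyExtension r L t = L t := fun t => greedyExtension_of_le L
  have hE1 : greedyExtension r L 1 = n := by rw [hagree 1 hr, hL1]
  induction m, hm using Nat.le_induction with
  | base =>
    constructor
    · intro t j hj hjt htr
      rw [hagree t htr, hagree j (by omega), hagree (t - j) (by omega)]
      exact h t j hj hjt htr
    · intro j hj hjr
      rw [hagree (j + 1) hjr, hagree j hjr.le]
      exact hs j hj hjr
  | succ m hm ih =>
    have hmax := greedyExtension_of_lt L (Nat.lt_succ_of_le hm)
    exact ⟨ih.1.succ hmax, ih.2.succ ih.1 hE1 (hr.trans hm) hmax⟩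

end Extension

theorem stmt16_general (n : ℕ) (r : ℕ) (hr : 1 ≤ r)
    (L : ℕ → ℕ) (hL1 : L 1 = n)
    (hstep : ∀ j, 1 ≤ j → j < r → L (j + 1) = L j + n ∨ L (j + 1) = L j + (n + 1))
    (hqb : ∀ t j, 0 < j → j < t → t ≤ r →
      L t - 1 ≤ L j + L (t - j) ∧ L j + L (t - j) ≤ L t) :
    ∃ L' : ℕ → ℕ, (∀ j, j ≤ r → L' j = L j) ∧ L' 1 = n ∧
      (∀ j, 1 ≤ j → L' (j + 1) = L' j + n ∨ L' (j + 1) = L' j + (n + 1)) ∧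
      (∀ t j, 0 < j → j < t →
        L' t - 1 ≤ L' j + L' (t - j) ∧ L' j + L' (t - j) ≤ L' t) := by
  have hspec := fun m (hm : r ≤ m) => greedyExtension_spec hr hL1 hstep hqb hm
  refine ⟨greedyExtension r L, fun j => greedyExtension_of_le L, ?_, ?_, ?_⟩
  · rw [greedyExtension_of_le L hr, hL1]
  · intro j hj
    exact (hspec (r + j + 1) (by omega)).2 j hj (by omega)
  · intro t j hj hjt
    exact (hspec (r + t) (by omega)).1 t j hj hjt (by omega)

theorem stmt16 (n : ℕ) (hn : 2 ≤ n) (r : ℕ) (hr : 1 ≤ r)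
    (L : ℕ → ℕ) (hL1 : L 1 = n)
    (hstep : ∀ j, 1 ≤ j → j < r → L (j + 1) = L j + n ∨ L (j + 1) = L j + (n + 1))
    (hqb : ∀ t j, 0 < j → j < t → t ≤ r →
      L t - 1 ≤ L j + L (t - j) ∧ L j + L (t - j) ≤ L t) :
    ∃ L' : ℕ → ℕ, (∀ j, j ≤ r → L' j = L j) ∧ L' 1 = n ∧
      (∀ j, 1 ≤ j → L' (j + 1) = L' j + n ∨ L' (j + 1) = L' j + (n + 1)) ∧
      (∀ t j, 0 < j → j < t →
        L' t - 1 ≤ L' j + L' (t - j) ∧ L' j + L' (t - j) ≤ L' t) :=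
  stmt16_general n r hr L hL1 hstep hqb
end

section
/- Fix n ≥ 2 and let L ∈ Δ(n, n+1) (so L_1 = n and L_{j+1} - L_j ∈ {n, n+1}) be a sequence that is NOT quasi-balanced. Then there exist k, r ∈ ℕ such that either (1) L_{k+r} = L_k + L_r - 1 and L_r - L_{r-1} = n + 1, or (2) L_{k+r} = L_k + L_r + 2 and L_{r+1} - L_r = n + 1. -/
/-!
For fixed `t`, the map `j ↦ Δ_{t,j} = L_t - L_j - L_{t-j}` starts at `Δ_{t,1} = L_t - L_{t-1} - n ∈ {0, 1}`
and changes by `(L_{t-j} - L_{t-j-1}) - (L_{j+1} - L_j) ∈ {-1, 0, 1}` from `j` to `j + 1`.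
So if some `Δ_{t,j}` leaves `{0, 1}`, somewhere it steps from `1` up to `2` or from `0` down to `-1`,
and a step of `+1` (resp. `-1`) forces the increment `L_{t-j} - L_{t-j-1}` (resp. `L_{j+1} - L_j`)
to be `n + 1`.
-/

theorem Nat.exists_lt_le_succ_of_lt_of_le {α : Type*} [LinearOrder α] {f : ℕ → α} {a b : ℕ}
    {c : α} (hab : a ≤ b) (ha : f a < c) (hb : c ≤ f b) :
    ∃ i, a ≤ i ∧ i < b ∧ f i < c ∧ c ≤ f (i + 1) := by
  induction b, hab using Nat.le_induction with
  | base => exact absurd hb ha.not_ge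
  | succ b hab ih =>
    by_cases hcb : c ≤ f b
    · obtain ⟨i, hai, hib, hi⟩ := ih hcb
      exact ⟨i, hai, hib.trans b.lt_succ_self, hi⟩
    · exact ⟨b, hab, b.lt_succ_self, not_le.mp hcb, hb⟩

def defect (L : ℕ → ℕ) (t j : ℕ) : ℤ := L t - L j - L (t - j)

theorem defect_succ (L : ℕ → ℕ) (t j : ℕ) :
    defect L t (j + 1) = defect L t j - (L (j + 1) - L j) + (L (t - j) - L (t - (j + 1))) := by
  unfold defect
  ring

section Steps

variable {n t : ℕ} {L : ℕ → ℕ}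
  (hstep : ∀ j, 1 ≤ j → L (j + 1) = L j + n ∨ L (j + 1) = L j + (n + 1))
include hstep

theorem defect_one_mem_Icc (hL1 : L 1 = n) (ht : 2 ≤ t) : defect L t 1 ∈ Set.Icc 0 1 := by
  have h := hstep (t - 1) (by omega)
  rw [Nat.sub_add_cancel (by omega)] at h
  unfold defect
  constructor <;> omega

theorem defect_succ_cases {j : ℕ} (hj : 1 ≤ j) (hjt : j + 1 < t) :
    (defect L t (j + 1) = defect L t j - 1 ∧ L (j + 1) = L j + (n + 1)) ∨
      defect L t (j + 1) = defect L t j ∨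
      (defect L t (j + 1) = defect L t j + 1 ∧ L (t - j) = L (t - (j + 1)) + (n + 1)) := by
  have hj' := hstep j hj
  have hr := hstep (t - (j + 1)) (by omega)
  rw [show t - (j + 1) + 1 = t - j by omega] at hr
  rw [defect_succ]
  omega

theorem exists_of_two_le_defect (hL1 : L 1 = n) {j : ℕ} (hj : 0 < j) (hjt : j < t)
    (h : 2 ≤ defect L t j) :
    ∃ k r, 1 ≤ k ∧ 1 ≤ r ∧ L (k + r) = L k + L r + 2 ∧ L (r + 1) = L r + (n + 1) := by
  obtain ⟨h0, h1⟩ := defect_one_mem_Icc hstep hL1 (t := t) (by omega)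
  obtain ⟨i, hi, hij, hlt, hle⟩ :=
    Nat.exists_lt_le_succ_of_lt_of_le (f := defect L t) (a := 1) hj (by omega) h
  obtain ⟨hdown, -⟩ | hsame | ⟨hup, hinc⟩ := defect_succ_cases hstep (t := t) hi (by omega)
  · omega
  · omega
  refine ⟨i + 1, t - (i + 1), by omega, by omega, ?_, ?_⟩
  · rw [show i + 1 + (t - (i + 1)) = t by omega]
    unfold defect at hlt hle hup
    omega
  · rwa [show t - (i + 1) + 1 = t - i by omega]

theorem exists_of_defect_neg (hL1 : L 1 = n) {j : ℕ} (hj : 0 < j) (hjt : j < t)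
    (h : defect L t j < 0) :
    ∃ k r, 1 ≤ k ∧ 1 ≤ r ∧ L (k + r) + 1 = L k + L r ∧ L r = L (r - 1) + (n + 1) := by
  obtain ⟨h0, h1⟩ := defect_one_mem_Icc hstep hL1 (t := t) (by omega)
  obtain ⟨i, hi, hij, hlt, hle⟩ :=
    Nat.exists_lt_le_succ_of_lt_of_le (f := fun i ↦ -defect L t i) (a := 1) (c := 1) hj (by omega)
      (by omega)
  obtain ⟨hdown, hinc⟩ | hsame | ⟨hup, -⟩ := defect_succ_cases hstep (t := t) hi (by omega)
  · refine ⟨t - (i + 1), i + 1, by omega, by omega, ?_, hinc⟩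
    rw [show t - (i + 1) + (i + 1) = t by omega]
    unfold defect at hlt hle hdown
    omega
  · omega
  · omega

end Steps

theorem stmt17_general (n : ℕ) (L : ℕ → ℕ) (hL1 : L 1 = n)
    (hstep : ∀ j, 1 ≤ j → L (j + 1) = L j + n ∨ L (j + 1) = L j + (n + 1))
    (hnqb : ¬ ∀ t j, 0 < j → j < t →
      L t - 1 ≤ L j + L (t - j) ∧ L j + L (t - j) ≤ L t) :
    ∃ k r, 1 ≤ k ∧ 1 ≤ r ∧
      ((L (k + r) + 1 = L k + L r ∧ L r = L (r - 1) + (n + 1)) ∨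
        (L (k + r) = L k + L r + 2 ∧ L (r + 1) = L r + (n + 1))) := by
  push Not at hnqb
  obtain ⟨t, j, hj, hjt, hfail⟩ := hnqb
  by_cases hlow : L t - 1 ≤ L j + L (t - j)
  · obtain ⟨k, r, hk, hr, hkr⟩ :=
      exists_of_defect_neg hstep hL1 hj hjt (by unfold defect; have := hfail hlow; omega)
    exact ⟨k, r, hk, hr, Or.inl hkr⟩
  · obtain ⟨k, r, hk, hr, hkr⟩ :=
      exists_of_two_le_defect hstep hL1 hj hjt (by unfold defect; omega)
    exact ⟨k, r, hk, hr, Or.inr hkr⟩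

theorem stmt17 (n : ℕ) (hn : 2 ≤ n) (L : ℕ → ℕ) (hL1 : L 1 = n)
    (hstep : ∀ j, 1 ≤ j → L (j + 1) = L j + n ∨ L (j + 1) = L j + (n + 1))
    (hnqb : ¬ ∀ t j, 0 < j → j < t →
      L t - 1 ≤ L j + L (t - j) ∧ L j + L (t - j) ≤ L t) :
    ∃ k r, 1 ≤ k ∧ 1 ≤ r ∧
      ((L (k + r) + 1 = L k + L r ∧ L r = L (r - 1) + (n + 1)) ∨
        (L (k + r) = L k + L r + 2 ∧ L (r + 1) = L r + (n + 1))) :=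
  stmt17_general n L hL1 hstep hnqb
end

section
/- Let K be a field, let Δ(n,n+1) with n ≥ 2 and L ∈ Δ(n, n+1), and suppose there exist k, r with L_{k+r} = L_k + L_r + 2 and L_{r+1} > L_r + 2. Let a ∈ K \ {0, -1}, d = 1/(a+1), and let m be the infinite matrix with rows m_{j,*} = E_0 - E_1 for j < L_1, m_{j,*} = d^t(E_0 - E_1) for L_t < j < L_{t+1}, and m_{L_t,*} = d^t E_0 - d^{t-1} E_1 + a E_{L_t + 1}. Then (m·Y^{L_r+1}·m)_{L_k, L_{r+k}+1} = a² ≠ 0; in particular m·Y^{L_r+1}·m ≠ 0. -/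
/-!
Row `L k` of `m` is supported on the columns `0`, `1` and `L k + 1`, so the `(L k, L (r+k) + 1)`
entry of `m Y^(L r + 1) m` only involves rows `L r + 1`, `L r + 2` and `L k + L r + 2 = L (k+r)`
of `m`. The first two lie strictly between `L r` and `L (r+1)` (this is where `L (r+1) > L r + 2`
enters), hence are multiples of `E_0 - E_1` and vanish in column `L (r+k) + 1 ≥ 2`; the third
contributes `a` at that column, so the entry is `a · a`.
-/

theorem stmt18_general {K : Type*} [Field K] (n : ℕ) (hn : 2 ≤ n)
    (L : ℕ → ℕ) (hL1 : L 1 = n)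
    (hstep : ∀ j, 1 ≤ j → L (j + 1) = L j + n ∨ L (j + 1) = L j + (n + 1))
    (k r : ℕ) (hk : 1 ≤ k) (hr : 1 ≤ r)
    (hkr : L (k + r) = L k + L r + 2) (hgap : L r + 2 < L (r + 1))
    (a : K) (ha0 : a ≠ 0) (d : K)
    (M : ℕ → ℕ → K)
    (hrowmid : ∀ t, 1 ≤ t → ∀ j, L t < j → j < L (t + 1) → ∀ i,
      M j i = d ^ t * (if i = 0 then 1 else if i = 1 then -1 else 0))
    (hrowL : ∀ t, 1 ≤ t → ∀ i,
      M (L t) i = if i = 0 then d ^ t else if i = 1 then -d ^ (t - 1)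
        else if i = L t + 1 then a else 0) :
    (∑ᶠ v : ℕ, M (L k) v * M (v + (L r + 1)) (L (r + k) + 1)) = a ^ 2 ∧ a ^ 2 ≠ 0 := by
  have hmono : MonotoneOn L (Set.Ici 1) :=
    monotoneOn_nat_Ici_of_le_succ fun j hj => by rcases hstep j hj with h | h <;> omega
  have hLk : 1 ≤ L k := by have := hmono (Set.mem_Ici.2 le_rfl) hk hk; omega
  have hLrk : L (r + k) = L k + 1 + (L r + 1) := by rw [add_comm, hkr]; ring
  have hlead : ∀ t, 1 ≤ t → 1 ≤ L t → M (L t) (L t + 1) = a := fun t ht hLt => by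
    rw [hrowL t ht, if_neg (by omega), if_neg (by omega), if_pos rfl]
  have hmid : ∀ j, L r < j → j < L (r + 1) → M j (L (r + k) + 1) = 0 := fun j h₁ h₂ => by
    simp [hrowmid r hr j h₁ h₂, hLrk]
  have hsupp : ∀ v ≠ L k + 1, M (L k) v * M (v + (L r + 1)) (L (r + k) + 1) = 0 := by
    rintro (_ | _ | v) hv
    · rw [hmid (0 + (L r + 1)) (by omega) (by omega), mul_zero]
    · rw [hmid (0 + 1 + (L r + 1)) (by omega) (by omega), mul_zero]
    · rw [hrowL k hk, if_neg (by omega), if_neg (by omega), if_neg hv, zero_mul]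
  refine ⟨?_, pow_ne_zero 2 ha0⟩
  have hlead' : M (L k + 1 + (L r + 1)) (L (r + k) + 1) = a := by
    simpa [hLrk] using hlead (r + k) (by omega) (by omega)
  rw [finsum_eq_single _ _ hsupp, hlead k hk hLk, hlead', sq]

theorem stmt18 {K : Type*} [Field K] (n : ℕ) (hn : 2 ≤ n)
    (L : ℕ → ℕ) (hL1 : L 1 = n)
    (hstep : ∀ j, 1 ≤ j → L (j + 1) = L j + n ∨ L (j + 1) = L j + (n + 1))
    (k r : ℕ) (hk : 1 ≤ k) (hr : 1 ≤ r)
    (hkr : L (k + r) = L k + L r + 2) (hgap : L r + 2 < L (r + 1))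
    (a : K) (ha0 : a ≠ 0) (ha1 : a ≠ -1) (d : K) (hd : d = (a + 1)⁻¹)
    (M : ℕ → ℕ → K)
    (hrow0 : ∀ j, j < L 1 → ∀ i, M j i = if i = 0 then 1 else if i = 1 then -1 else 0)
    (hrowmid : ∀ t, 1 ≤ t → ∀ j, L t < j → j < L (t + 1) → ∀ i,
      M j i = d ^ t * (if i = 0 then 1 else if i = 1 then -1 else 0))
    (hrowL : ∀ t, 1 ≤ t → ∀ i,
      M (L t) i = if i = 0 then d ^ t else if i = 1 then -d ^ (t - 1)
        else if i = L t + 1 then a else 0) :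
    (∑ᶠ v : ℕ, M (L k) v * M (v + (L r + 1)) (L (r + k) + 1)) = a ^ 2 ∧ a ^ 2 ≠ 0 :=
  stmt18_general n hn L hL1 hstep k r hk hr hkr hgap a ha0 d M hrowmid hrowL
end
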